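/- Let (a_m)_{m≥1} and (b_n)_{n≥1} be sequences of real numbers, p, q > 0, and suppose that the sequences ((1 + a_m²)^{-p/2})_m and ((1 + b_n²)^{-q/2})_n are summable. Then the double sequence ((1 + a_m² + b_n²)^{-(p+q)/2})_{m,n} is summable. -/

import Mathlib

/-! Since `1 + x + y` dominates both `1 + x` and `1 + y`, splitting the exponent `-(r + s)` as
`-r + -s` bounds each term of the double series by the product of a term of each single series,
and a product of two summable nonnegative series is summable over `ℕ × ℕ`. -/

open Real

lemma one_add_add_rpow_neg_add_le {x y r s : ℝ} (hx : 0 ≤ x) (hy : 0 ≤ y) (hr : 0 ≤ r)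
    (hs : 0 ≤ s) : (1 + x + y) ^ (-(r + s)) ≤ (1 + x) ^ (-r) * (1 + y) ^ (-s) := by
  rw [neg_add, rpow_add (by positivity)]
  exact mul_le_mul (rpow_le_rpow_of_nonpos (by positivity) (by linarith) (by linarith))
    (rpow_le_rpow_of_nonpos (by positivity) (by linarith) (by linarith)) (by positivity)
    (by positivity)

theorem summable_one_add_add_rpow_neg_add {ι κ : Type*} {x : ι → ℝ} {y : κ → ℝ} {r s : ℝ}
    (hx : ∀ i, 0 ≤ x i) (hy : ∀ j, 0 ≤ y j) (hr : 0 ≤ r) (hs : 0 ≤ s)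
    (hxr : Summable fun i => (1 + x i) ^ (-r)) (hys : Summable fun j => (1 + y j) ^ (-s)) :
    Summable fun ij : ι × κ => (1 + x ij.1 + y ij.2) ^ (-(r + s)) :=
  (hxr.mul_of_nonneg hys (fun i => rpow_nonneg (by linarith [hx i]) _)
      (fun j => rpow_nonneg (by linarith [hy j]) _)).of_nonneg_of_le
    (fun ij => rpow_nonneg (by linarith [hx ij.1, hy ij.2]) _)
    (fun ij => one_add_add_rpow_neg_add_le (hx ij.1) (hy ij.2) hr hs)

theorem stmt_1 (a b : ℕ → ℝ) (p q : ℝ) (hp : 0 < p) (hq : 0 < q)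
    (ha : Summable fun m => (1 + (a m) ^ 2) ^ (-(p / 2)))
    (hb : Summable fun n => (1 + (b n) ^ 2) ^ (-(q / 2))) :
    Summable fun mn : ℕ × ℕ =>
      (1 + (a mn.1) ^ 2 + (b mn.2) ^ 2) ^ (-((p + q) / 2)) := by
  rw [add_div]
  exact summable_one_add_add_rpow_neg_add (x := fun m => a m ^ 2) (y := fun n => b n ^ 2)
    (fun m => sq_nonneg (a m)) (fun n => sq_nonneg (b n)) (by positivity) (by positivity) ha hb
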